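/- There exist infinitely many non-equivalent monotone games over L5; that is, there is a sequence H_0, H_1, H_2, … of monotone games over L5 such that for all m ≠ n, H_m is not equivalent to H_n. -/

import Mathlib

universe u

/-- Combinatorial games over a poset `A` of atoms: either an atomic game `[a]` for an atom
`a : A`, or a composite game `⟨L|R⟩` where `L` and `R` are nonempty families of games
(the left and right options). -/
inductive PoGame (A : Type u) : Type (u + 1) where
  | atom : A → PoGame A
  | mk : (xl xr : Type u) → (xl → PoGame A) → (xr → PoGame A) →
      Nonempty xl → Nonempty xr → PoGame A

/-- The type of pre-games (normal-play combinatorial games), as in the older Mathlib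
(removed from the current Mathlib; restored here with its old definition). -/
inductive SetTheory.PGame : Type (u + 1)
  | mk : ∀ α β : Type u, (α → SetTheory.PGame) → (β → SetTheory.PGame) → SetTheory.PGame

/-- The pre-game `0 = { | }`, as in the older Mathlib. -/
instance SetTheory.PGame.instZeroPGame : Zero SetTheory.PGame :=
  ⟨⟨PEmpty, PEmpty, PEmpty.elim, PEmpty.elim⟩⟩

namespace PoGame

variable {A : Type u}

/-- `G` is an atomic game. -/
def IsAtomic : PoGame A → Prop
  | atom _ => True
  | mk _ _ _ _ _ _ => False

/-- `G` is a left option of the game given as second argument. -/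
def IsLeftOption (G : PoGame A) : PoGame A → Prop
  | atom _ => False
  | mk _ _ L _ _ _ => ∃ i, L i = G

/-- `G` is a right option of the game given as second argument. -/
def IsRightOption (G : PoGame A) : PoGame A → Prop
  | atom _ => False
  | mk _ _ _ R _ _ => ∃ j, R j = G

section Order

variable [PartialOrder A]

mutual
  /-- `Le G H` is the relation `G ≤ H` on games over the poset `A`, defined by mutual
  recursion with `Lf` (the relation `G ⊲ H`): `G ≤ H` iff every left option `G^L`
  satisfies `G^L ⊲ H`, every right option `H^R` satisfies `G ⊲ H^R`, and if `G` or `H`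
  is atomic then `G ⊲ H`. -/
  inductive Le : PoGame A → PoGame A → Prop
    | intro (G H : PoGame A)
        (hL : ∀ G', IsLeftOption G' G → Lf G' H)
        (hR : ∀ H', IsRightOption H' H → Lf G H')
        (hA : IsAtomic G ∨ IsAtomic H → Lf G H) : Le G H

  /-- `Lf G H` is the relation `G ⊲ H` on games over the poset `A`: it holds iff some
  right option `G^R` satisfies `G^R ≤ H`, or some left option `H^L` satisfies `G ≤ H^L`,
  or `G = [a]` and `H = [b]` are atomic with `a ≤ b` in `A`. -/
  inductive Lf : PoGame A → PoGame A → Prop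
    | rightOption (G H G' : PoGame A) (h : IsRightOption G' G) (hle : Le G' H) : Lf G H
    | leftOption (G H H' : PoGame A) (h : IsLeftOption H' H) (hle : Le G H') : Lf G H
    | atom (a b : A) (hab : a ≤ b) : Lf (atom a) (atom b)
end

/-- Two games are equivalent if `G ≤ H` and `H ≤ G`. -/
def GEquiv (G H : PoGame A) : Prop := Le G H ∧ Le H G

/-- `G` is locally monotone if `G ≤ G^L` for every left option `G^L` and `G^R ≤ G` for
every right option `G^R`. -/
def LocallyMonotone (G : PoGame A) : Prop :=
  (∀ G', IsLeftOption G' G → Le G G') ∧ (∀ G', IsRightOption G' G → Le G' G)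

/-- `G` is an option (left or right) of `H`. -/
def IsOption (G H : PoGame A) : Prop := IsLeftOption G H ∨ IsRightOption G H

/-- `G` is a position of `H`: `H` itself, an option of `H`, an option of an option, etc. -/
def IsPosition (G H : PoGame A) : Prop := Relation.ReflTransGen IsOption G H

/-- `G` is monotone if every position of `G` is locally monotone. -/
def Monotone (G : PoGame A) : Prop := ∀ K, IsPosition K G → LocallyMonotone K

end Order

/-- The 5-element linearly ordered set `L5 = {-3, -2, -1, 0, 1}`. -/
abbrev L5 : Type := {a : ℤ // -3 ≤ a ∧ a ≤ 1}

/-- `G` has mean `C`: an atomic game `[a]` has mean `a`, and a composite game has mean `C`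
iff every left option has mean `C + 1` and every right option has mean `C - 1`. -/
def HasMean : PoGame L5 → ℤ → Prop
  | atom a, C => (a : ℤ) = C
  | mk _ _ L R _ _, C => (∀ i, HasMean (L i) (C + 1)) ∧ (∀ j, HasMean (R j) (C - 1))

/-- The game `⟨G | H⟩` with a single left option `G` and a single right option `H`. -/
def ofPair (G H : PoGame A) : PoGame A :=
  mk PUnit PUnit (fun _ => G) (fun _ => H) ⟨PUnit.unit⟩ ⟨PUnit.unit⟩

/-- `⋆ = ⟨-1 | -3⟩`. -/
def star : PoGame L5 := ofPair (atom ⟨-1, by norm_num⟩) (atom ⟨-3, by norm_num⟩)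

/-- `M(G) = ⟨1 | G⟩`. -/
def M (G : PoGame L5) : PoGame L5 := ofPair (atom ⟨1, by norm_num⟩) G

/-- `P(G) = ⟨G | -2⟩`. -/
def P (G : PoGame L5) : PoGame L5 := ofPair G (atom ⟨-2, by norm_num⟩)

/-- `P⋆(G) = ⟨G | ⋆⟩`. -/
def Pstar (G : PoGame L5) : PoGame L5 := ofPair G star

/-- `Pn n G = P G` if `n` is odd, `P⋆ G` if `n` is even. -/
def Pn (n : ℕ) (G : PoGame L5) : PoGame L5 := if Odd n then P G else Pstar G

/-- The sequence `G_0 = [0]`, `G_{n+1} = M (Pn n (G_n))`. -/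
def Gseq : ℕ → PoGame L5
  | 0 => atom ⟨0, by norm_num⟩
  | n + 1 => M (Pn n (Gseq n))

/-- The normal-play game obtained from a game over `L5` by replacing every atom by the
normal-play game `0 = { | }`, keeping the tree of left and right options. -/
def np : PoGame L5 → SetTheory.PGame.{0}
  | atom _ => 0
  | mk xl xr L R _ _ => SetTheory.PGame.mk xl xr (fun i => np (L i)) (fun j => np (R j))

end PoGame

/-!
Write `G_{n+1} = ⟨1 | B_n⟩` with `B_n = ⟨G_n | s_n⟩`, where `s_n` is `[-2]` for odd `n` and
`⋆ = ⟨-1 | -3⟩` for even `n`. Local monotonicity of all positions reduces to `[-1] ≤ G_n ≤ [1]`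
and `B_k ≤ G_j` for all `k, j`, each an easy induction. For `m < n`, `G_n ≤ G_m` needs
`G_n ⊲ B_{m-1}`, i.e. `B_{n-1} ≤ B_{m-1}` or `G_n ≤ G_{m-1}`, and `B_k ≤ B_j` needs both
`G_k ⊲ B_j` and `B_k ⊲ s_j`; descending, everything ends in `[1] ≤ [0]` or in `B_{j+1} ⊲ s_j`.
The latter fails because consecutive stops alternate: `[-2]` and `⋆` are incomparable, and
`G_{j+1} ⊲ [-1]` fails.
-/

namespace PoGame

section Options

variable {A : Type*}

@[simp]
lemma isLeftOption_ofPair {K X Y : PoGame A} : IsLeftOption K (ofPair X Y) ↔ K = X := by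
  simp [ofPair, IsLeftOption, eq_comm]

@[simp]
lemma isRightOption_ofPair {K X Y : PoGame A} : IsRightOption K (ofPair X Y) ↔ K = Y := by
  simp [ofPair, IsRightOption, eq_comm]

@[simp]
lemma not_isLeftOption_atom {K : PoGame A} {a : A} : ¬ IsLeftOption K (atom a) := id

@[simp]
lemma not_isRightOption_atom {K : PoGame A} {a : A} : ¬ IsRightOption K (atom a) := id

@[simp]
lemma isAtomic_atom (a : A) : IsAtomic (atom a) := trivial

@[simp]
lemma ofPair_ne_atom {X Y : PoGame A} {a : A} : ofPair X Y ≠ atom a := by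
  simp [ofPair]

@[simp]
lemma not_isAtomic_ofPair {X Y : PoGame A} : ¬ IsAtomic (ofPair X Y) := id

end Options

section Order

variable {A : Type*} [PartialOrder A]

lemma le_iff {G H : PoGame A} :
    Le G H ↔ (∀ G', IsLeftOption G' G → Lf G' H) ∧ (∀ H', IsRightOption H' H → Lf G H') ∧
      (IsAtomic G ∨ IsAtomic H → Lf G H) :=
  ⟨fun ⟨_, _, hL, hR, hA⟩ => ⟨hL, hR, hA⟩, fun ⟨hL, hR, hA⟩ => .intro G H hL hR hA⟩

lemma lf_iff {G H : PoGame A} :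
    Lf G H ↔ (∃ G', IsRightOption G' G ∧ Le G' H) ∨ (∃ H', IsLeftOption H' H ∧ Le G H') ∨
      ∃ a b, a ≤ b ∧ G = atom a ∧ H = atom b := by
  constructor
  · rintro (⟨_, _, G', hG', hle⟩ | ⟨_, _, H', hH', hle⟩ | ⟨a, b, hab⟩)
    exacts [.inl ⟨G', hG', hle⟩, .inr (.inl ⟨H', hH', hle⟩), .inr (.inr ⟨a, b, hab, rfl, rfl⟩)]
  · rintro (⟨G', hG', hle⟩ | ⟨H', hH', hle⟩ | ⟨a, b, hab, rfl, rfl⟩)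
    exacts [.rightOption G H G' hG' hle, .leftOption G H H' hH' hle, .atom a b hab]

lemma lf_of_le_ofPair {G X Y : PoGame A} (h : Le G (ofPair X Y)) : Lf G Y :=
  (le_iff.1 h).2.1 Y (isRightOption_ofPair.2 rfl)

lemma lf_ofPair_of_le {G X Y : PoGame A} (h : Le G X) : Lf G (ofPair X Y) :=
  .leftOption _ _ _ (isLeftOption_ofPair.2 rfl) h

@[simp]
lemma atom_lf_atom {a b : A} : Lf (atom a) (atom b) ↔ a ≤ b := by
  simp [lf_iff]

@[simp]
lemma atom_le_atom {a b : A} : Le (atom a) (atom b) ↔ a ≤ b := by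
  simp [le_iff]

@[simp]
lemma ofPair_lf_atom {X Y : PoGame A} {b : A} : Lf (ofPair X Y) (atom b) ↔ Le Y (atom b) := by
  simp [lf_iff]

@[simp]
lemma atom_lf_ofPair {a : A} {X Y : PoGame A} : Lf (atom a) (ofPair X Y) ↔ Le (atom a) X := by
  simp [lf_iff]

@[simp]
lemma ofPair_lf_ofPair {X Y X' Y' : PoGame A} :
    Lf (ofPair X Y) (ofPair X' Y') ↔ Le Y (ofPair X' Y') ∨ Le (ofPair X Y) X' := by
  simp [lf_iff]

@[simp]
lemma ofPair_le_atom {X Y : PoGame A} {b : A} :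
    Le (ofPair X Y) (atom b) ↔ Lf X (atom b) ∧ Le Y (atom b) := by
  simp [le_iff]

@[simp]
lemma atom_le_ofPair {a : A} {X Y : PoGame A} :
    Le (atom a) (ofPair X Y) ↔ Lf (atom a) Y ∧ Le (atom a) X := by
  simp [le_iff]

@[simp]
lemma ofPair_le_ofPair {X Y X' Y' : PoGame A} :
    Le (ofPair X Y) (ofPair X' Y') ↔ Lf X (ofPair X' Y') ∧ Lf (ofPair X Y) Y' := by
  simp [le_iff]

lemma monotone_atom (a : A) : (atom a).Monotone := by
  intro K hK
  rcases hK.cases_tail with rfl | ⟨_, _, hK' | hK'⟩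
  · exact ⟨by simp, by simp⟩
  all_goals simp at hK'

lemma Monotone.ofPair {X Y : PoGame A} (hX : X.Monotone) (hY : Y.Monotone)
    (hXl : Le (ofPair X Y) X) (hYr : Le Y (ofPair X Y)) : (ofPair X Y).Monotone := by
  intro K hK
  rcases hK.cases_tail with rfl | ⟨K', hK, hK' | hK'⟩
  · exact ⟨by simpa using hXl, by simpa using hYr⟩
  · rw [isLeftOption_ofPair] at hK'
    exact hX K (hK' ▸ hK)
  · rw [isRightOption_ofPair] at hK'
    exact hY K (hK' ▸ hK)

end Order

def stopper (n : ℕ) : PoGame L5 := if Odd n then atom ⟨-2, by norm_num⟩ else star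

lemma Pn_eq_ofPair (n : ℕ) (G : PoGame L5) : Pn n G = ofPair G (stopper n) := by
  unfold Pn P Pstar stopper
  split_ifs <;> rfl

lemma Gseq_succ (n : ℕ) :
    Gseq (n + 1) = ofPair (atom ⟨1, by norm_num⟩) (ofPair (Gseq n) (stopper n)) := by
  rw [Gseq, M, Pn_eq_ofPair]

lemma star_le_atom {c : L5} (hc : -1 ≤ (c : ℤ)) : Le star (atom c) := by
  simp [star, ← Subtype.coe_le_coe]
  omega

lemma atom_le_star : Le (atom ⟨-3, by norm_num⟩) star := by
  simp [star, Subtype.mk_le_mk]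

lemma stopper_le_atom (n : ℕ) {c : L5} (hc : -1 ≤ (c : ℤ)) : Le (stopper n) (atom c) := by
  unfold stopper
  split_ifs
  · simp [← Subtype.coe_le_coe]; omega
  · exact star_le_atom hc

lemma Gseq_lf_atom {c : L5} (hc : 0 ≤ (c : ℤ)) : ∀ n, Lf (Gseq n) (atom c)
  | 0 => by simpa [Gseq, ← Subtype.coe_le_coe] using hc
  | n + 1 => by simp [Gseq_succ, Gseq_lf_atom hc n, stopper_le_atom n (c := c) (by omega)]

lemma Gseq_le_one (n : ℕ) : Le (Gseq n) (atom ⟨1, by norm_num⟩) := by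
  cases n with
  | zero => simp [Gseq, Subtype.mk_le_mk]
  | succ n => simp [Gseq_succ, Gseq_lf_atom, stopper_le_atom]

lemma atom_le_Gseq {c : L5} (hc : (c : ℤ) ≤ 0) : ∀ n, Le (atom c) (Gseq n)
  | 0 => by simpa [Gseq, ← Subtype.coe_le_coe] using hc
  | n + 1 => by simp [Gseq_succ, atom_le_Gseq hc n, ← Subtype.coe_le_coe, c.2.2]

lemma ofPair_Gseq_le_Gseq (k : ℕ) : ∀ j, Le (ofPair (Gseq k) (stopper k)) (Gseq j)
  | 0 => by simp [Gseq, Gseq_lf_atom, stopper_le_atom]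
  | j + 1 => by
    rw [Gseq_succ, ofPair_le_ofPair]
    exact ⟨lf_ofPair_of_le (Gseq_le_one k),
      ofPair_lf_ofPair.2 (.inr (ofPair_Gseq_le_Gseq k j))⟩

lemma stopper_le_ofPair_Gseq (n : ℕ) : Le (stopper n) (ofPair (Gseq n) (stopper n)) := by
  unfold stopper
  split_ifs
  · simp [atom_le_Gseq]
  · simp [star, atom_le_Gseq]

lemma monotone_stopper (n : ℕ) : (stopper n).Monotone := by
  unfold stopper
  split_ifs
  · exact monotone_atom _
  · exact (monotone_atom _).ofPair (monotone_atom _) (star_le_atom le_rfl) atom_le_star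

lemma monotone_Gseq : ∀ n, (Gseq n).Monotone
  | 0 => monotone_atom _
  | n + 1 => by
    have hB := (monotone_Gseq n).ofPair (monotone_stopper n) (ofPair_Gseq_le_Gseq n n)
      (stopper_le_ofPair_Gseq n)
    have hG := Gseq_le_one (n + 1)
    have hBG := ofPair_Gseq_le_Gseq n (n + 1)
    rw [Gseq_succ] at hG hBG ⊢
    exact (monotone_atom _).ofPair hB hG hBG

lemma not_Gseq_lf_neg_one : ∀ n, ¬ Lf (Gseq n) (atom ⟨-1, by norm_num⟩)
  | 0 => by simp [Gseq]
  | n + 1 => by simp [Gseq_succ, not_Gseq_lf_neg_one n]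

lemma not_ofPair_Gseq_succ_lf_stopper (n : ℕ) :
    ¬ Lf (ofPair (Gseq (n + 1)) (stopper (n + 1))) (stopper n) := by
  unfold stopper
  rcases Nat.even_or_odd n with hn | hn
  · simp [hn.add_one, Nat.not_odd_iff_even.2 hn, star, not_Gseq_lf_neg_one]
  · simp [Nat.not_odd_iff_even.2 hn.add_one, hn, star]

mutual

lemma not_Gseq_le_Gseq : ∀ {n m : ℕ}, m < n → ¬ Le (Gseq n) (Gseq m)
  | n + 1, 0, _ => by
    rw [Gseq_succ]
    simp [Gseq]
  | _ + 1, m + 1, h => fun hle =>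
    not_Gseq_lf_ofPair_Gseq (by omega) (lf_of_le_ofPair (Gseq_succ m ▸ hle))
termination_by n m => (n + m, 0)

lemma not_Gseq_lf_ofPair_Gseq : ∀ {n m : ℕ}, m + 1 < n →
    ¬ Lf (Gseq n) (ofPair (Gseq m) (stopper m))
  | n + 1, _, h => by
    rw [Gseq_succ n, ofPair_lf_ofPair, not_or, ← Gseq_succ n]
    exact ⟨not_ofPair_Gseq_le_ofPair_Gseq (by omega), not_Gseq_le_Gseq (by omega)⟩
termination_by n m => (n + m, 1)

lemma not_ofPair_Gseq_le_ofPair_Gseq {n m : ℕ} (h : m < n) :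
    ¬ Le (ofPair (Gseq n) (stopper n)) (ofPair (Gseq m) (stopper m)) := by
  rw [ofPair_le_ofPair, not_and_or]
  obtain h | rfl := Nat.lt_or_eq_of_le (Nat.succ_le_of_lt h)
  · exact .inl (not_Gseq_lf_ofPair_Gseq h)
  · exact .inr (not_ofPair_Gseq_succ_lf_stopper m)
termination_by (n + m, 2)

end

end PoGame

open PoGame in
/-- There exist infinitely many non-equivalent monotone games over `L5`: a sequence of
monotone games that are pairwise non-equivalent. -/
theorem stmt_15 :
    ∃ H : ℕ → PoGame L5, (∀ n, PoGame.Monotone (H n)) ∧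
      ∀ m n : ℕ, m ≠ n → ¬ GEquiv (H m) (H n) := by
  refine ⟨Gseq, monotone_Gseq, fun m n hmn hequiv => ?_⟩
  rcases hmn.lt_or_gt with h | h
  · exact not_Gseq_le_Gseq h hequiv.2
  · exact not_Gseq_le_Gseq h hequiv.1
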